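/- Let μ > 0 and define Q[p]₀ = −(∑_{k≥2}(k−1)pₖ)·p₀ and Q[p]ₙ = n·p_{n+1} + (∑_{k≥2}(k−1)pₖ)·p_{n−1} − (n−1+∑_{k≥2}(k−1)pₖ)·pₙ for n ≥ 1. If p has all pₙ ≥ 0, ∑ₙ pₙ = 1 and ∑ₙ n·pₙ = μ (with suitable summability), then ∑ₙ Q[p]ₙ = 0 and ∑ₙ n·Q[p]ₙ = 0. -/

import Mathlib

/-- `S p = ∑_{k≥2} (k−1)·pₖ`. -/
noncomputable def Sop (p : ℕ → ℝ) : ℝ := ∑' k : ℕ, ((k : ℝ) + 1) * p (k + 2)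

/-- The collision operator Q of the sticky dispersion mean-field system. -/
noncomputable def Qop (p : ℕ → ℝ) : ℕ → ℝ
  | 0 => -(Sop p) * p 0
  | (n + 1) => ((n : ℝ) + 1) * p (n + 2) + Sop p * p n
      - ((n : ℝ) + 1 - 1) * p (n + 1) - Sop p * p (n + 1)

/-!
With the flux `Fₙ = n pₙ₊₁` and `S = Sop p = ∑ₙ Fₙ`, the operator is in conservative form:
`Q[p]ₙ₊₁ = (Fₙ₊₁ - Fₙ) + S (pₙ - pₙ₊₁)` and `Q[p]₀ = -S p₀`. Summing, the first difference
telescopes to `F₀ = 0` and the second to `S p₀`, which cancels `Q[p]₀`. For the first moment,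
summation by parts gives `(n+1)(Fₙ₊₁ - Fₙ) = ((n+1) Fₙ₊₁ - n Fₙ) - Fₙ` and
`(n+1)(pₙ - pₙ₊₁) = (n pₙ - (n+1) pₙ₊₁) + pₙ`, so the moment is `-S + S ∑ₙ pₙ = 0`.
-/

theorem HasSum.sub_succ {G : Type*} [AddCommGroup G] [TopologicalSpace G] [IsTopologicalAddGroup G]
    {f : ℕ → G} {a : G} (hf : HasSum f a) : HasSum (fun n ↦ f n - f (n + 1)) (f 0) := by
  have hshift : HasSum (fun n ↦ f (n + 1)) (a - f 0) := by
    simpa using (hasSum_nat_add_iff' 1).2 hf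
  simpa using hf.sub hshift

theorem Summable.natCast_pow_mul_succ {p : ℕ → ℝ} {k : ℕ}
    (h : Summable fun n : ℕ ↦ (n : ℝ) ^ k * p n) :
    Summable fun n : ℕ ↦ (n : ℝ) ^ k * p (n + 1) := by
  refine ((summable_nat_add_iff 1).2 h).abs.of_norm_bounded fun n ↦ ?_
  simp only [Real.norm_eq_abs, abs_mul, abs_pow, Nat.abs_cast]
  gcongr
  exact_mod_cast n.le_succ

namespace Qop

def flux (p : ℕ → ℝ) (n : ℕ) : ℝ := n * p (n + 1)

variable (p : ℕ → ℝ)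

theorem flux_zero : flux p 0 = 0 := by simp [flux]

theorem hasSum_flux (h : Summable fun n : ℕ ↦ (n : ℝ) * p n) : HasSum (flux p) (Sop p) := by
  have hs : Summable (flux p) :=
    (Summable.natCast_pow_mul_succ (k := 1) (by simpa using h)).congr fun n ↦ by simp [flux]
  have hshift : HasSum (fun n ↦ flux p (n + 1)) (Sop p - ∑ i ∈ Finset.range 1, flux p i) := by
    have hSop : Sop p = ∑' n, flux p (n + 1) :=
      tsum_congr fun n ↦ by simp only [flux]; push_cast; ring
    rw [Finset.sum_range_one, flux_zero, sub_zero, hSop]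
    exact ((summable_nat_add_iff 1).2 hs).hasSum
  exact (hasSum_nat_add_iff' 1).1 hshift

theorem succ_eq_flux (n : ℕ) :
    Qop p (n + 1) = -(flux p n - flux p (n + 1)) + Sop p * (p n - p (n + 1)) := by
  simp only [Qop, flux]; push_cast; ring

theorem succ_mul_succ_eq_flux (n : ℕ) :
    ((n : ℝ) + 1) * Qop p (n + 1) =
      -(n * flux p n - (n + 1 : ℕ) * flux p (n + 1)) - flux p n
        + Sop p * ((n * p n - (n + 1 : ℕ) * p (n + 1)) + p n) := by
  rw [succ_eq_flux]; simp only [flux]; push_cast; ring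

variable {p}

theorem hasSum_zero (hsum : Summable p) (hmom : Summable fun n : ℕ ↦ (n : ℝ) * p n) :
    HasSum (Qop p) 0 := by
  have htel := (hasSum_flux p hmom).sub_succ.neg.add (hsum.hasSum.sub_succ.mul_left (Sop p))
  rw [flux_zero, neg_zero, zero_add, ← funext (succ_eq_flux p)] at htel
  refine (hasSum_nat_add_iff' 1).1 ?_
  simpa [Qop] using htel

theorem hasSum_natCast_mul_zero (hsum : Summable p) (hmom : Summable fun n : ℕ ↦ (n : ℝ) * p n)
    (hmom2 : Summable fun n : ℕ ↦ (n : ℝ) ^ 2 * p n) (hmass : ∑' n, p n = 1) :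
    HasSum (fun n : ℕ ↦ (n : ℝ) * Qop p n) 0 := by
  have hG : Summable fun n : ℕ ↦ (n : ℝ) * flux p n :=
    (Summable.natCast_pow_mul_succ hmom2).congr fun n ↦ by simp only [flux]; ring
  have htel := (hG.hasSum.sub_succ.neg.sub (hasSum_flux p hmom)).add
    ((hmom.hasSum.sub_succ.add hsum.hasSum).mul_left (Sop p))
  simp only [hmass, Nat.cast_zero, zero_mul, neg_zero, zero_sub, zero_add, mul_one,
    neg_add_cancel, ← succ_mul_succ_eq_flux] at htel
  refine (hasSum_nat_add_iff' 1).1 ?_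
  simpa using htel

end Qop

theorem stmt_10_general (p : ℕ → ℝ)
    (hsum : Summable p) (hmom : Summable (fun n : ℕ => (n : ℝ) * p n))
    (hmom2 : Summable (fun n : ℕ => (n : ℝ) ^ 2 * p n))
    (h1 : ∑' n, p n = 1) :
    ∑' n, Qop p n = 0 ∧ ∑' n : ℕ, (n : ℝ) * Qop p n = 0 :=
  ⟨(Qop.hasSum_zero hsum hmom).tsum_eq, (Qop.hasSum_natCast_mul_zero hsum hmom hmom2 h1).tsum_eq⟩

/-- Conservation of mass and mean: `∑ₙ Q[p]ₙ = 0` and `∑ₙ n·Q[p]ₙ = 0`. -/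
theorem stmt_10 (μ : ℝ) (hμ : 0 < μ) (p : ℕ → ℝ) (hpos : ∀ n, 0 ≤ p n)
    (hsum : Summable p) (hmom : Summable (fun n : ℕ => (n : ℝ) * p n))
    (hmom2 : Summable (fun n : ℕ => (n : ℝ) ^ 2 * p n))
    (h1 : ∑' n, p n = 1) (h2 : ∑' n : ℕ, (n : ℝ) * p n = μ) :
    ∑' n, Qop p n = 0 ∧ ∑' n : ℕ, (n : ℝ) * Qop p n = 0 :=
  stmt_10_general p hsum hmom hmom2 h1
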